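/- For every integer i ≥ 0, the operator identity x^i D^{i+1} = Σ_{m=0}^i s(i+1, m+1) (Dx)^m D holds on ℂ[X], where s(n,k) are the (signed) Stirling numbers of the first kind. -/

import Mathlib

open Polynomial Finset

/-- Signed Stirling numbers of the first kind. -/
def stirling1 : ℕ → ℕ → ℤ
  | 0, 0 => 1
  | 0, _ + 1 => 0
  | _ + 1, 0 => 0
  | n + 1, k + 1 => stirling1 n k - (n : ℤ) * stirling1 n (k + 1)

/-- `Dx` is the operator `p ↦ D(X * p)` on `ℂ[X]`. -/
noncomputable def Dx (p : ℂ[X]) : ℂ[X] := derivative (X * p)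

/-
Both sides are linear, so it suffices to compare them on `X ^ (n + 1)`. Since `Dx` scales `X ^ n`
by `n + 1`, the right side becomes `X ^ n` times `∑ₘ s(i+1, m+1) (n+1)^(m+1)`. The Stirling
numbers of the first kind are the coefficients of the falling factorial polynomial, so this sum is
`(n + 1)(n)⋯(n + 1 - i)`, exactly the factor that `X ^ i * D^(i+1)` produces from `X ^ (n + 1)`.
-/

theorem stirling1_eq_zero_of_lt : ∀ {n k : ℕ}, n < k → stirling1 n k = 0
  | 0, _ + 1, _ => rfl
  | n + 1, k + 1, h => by
    rw [stirling1, stirling1_eq_zero_of_lt (by omega : n < k),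
      stirling1_eq_zero_of_lt (by omega : n < k + 1), mul_zero, sub_zero]

theorem coeff_descPochhammer {R : Type*} [CommRing R] (n k : ℕ) :
    (descPochhammer R n).coeff k = stirling1 n k := by
  induction n generalizing k with
  | zero => cases k <;> simp [stirling1, coeff_one]
  | succ n ih =>
    cases k with
    | zero =>
      rw [coeff_zero_eq_eval_zero, descPochhammer_ne_zero_eval_zero R n.succ_ne_zero]
      simp [stirling1]
    | succ k =>
      rw [descPochhammer_succ_right, ← C_eq_natCast, coeff_mul_X_sub_C, ih, ih, stirling1]
      push_cast
      ring

theorem eval_descPochhammer_succ {R : Type*} [CommRing R] (n : ℕ) (x : R) :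
    (descPochhammer R (n + 1)).eval x =
      ∑ m ∈ range (n + 1), (stirling1 (n + 1) (m + 1) : R) * x ^ (m + 1) := by
  have hdeg : (descPochhammer R (n + 1)).natDegree < n + 2 := by
    refine Nat.lt_succ_of_le (natDegree_le_iff_coeff_eq_zero.2 fun k hk => ?_)
    rw [coeff_descPochhammer, stirling1_eq_zero_of_lt hk, Int.cast_zero]
  rw [eval_eq_sum_range' hdeg, sum_range_succ']
  simp [coeff_descPochhammer, stirling1]

theorem X_pow_mul_iterate_derivative_monomial_succ {R : Type*} [CommSemiring R]
    (i n : ℕ) (c : R) :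
    X ^ i * derivative^[i + 1] (monomial (n + 1) c) =
      monomial n ((n + 1).descFactorial (i + 1) * c) := by
  rw [← C_mul_X_pow_eq_monomial, iterate_derivative_C_mul, iterate_derivative_X_pow_eq_C_mul,
    ← C_mul_X_pow_eq_monomial]
  rcases le_or_gt i n with h | h
  · obtain ⟨j, rfl⟩ := Nat.exists_eq_add_of_le h
    rw [show i + j + 1 - (i + 1) = j by omega, C_mul, pow_add]
    ring
  · rw [Nat.descFactorial_eq_zero_iff_lt.2 (Nat.succ_lt_succ h)]
    simp

noncomputable def dxLinearMap : ℂ[X] →ₗ[ℂ] ℂ[X] := derivative ∘ₗ LinearMap.mulLeft ℂ X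

theorem coe_dxLinearMap_pow (m : ℕ) : ⇑(dxLinearMap ^ m) = Dx^[m] :=
  Module.End.coe_pow _ m

theorem iterate_Dx_monomial (m k : ℕ) (c : ℂ) :
    Dx^[m] (monomial k c) = monomial k (((k : ℂ) + 1) ^ m * c) := by
  induction m with
  | zero => simp
  | succ m ih =>
    rw [Function.iterate_succ_apply', ih, Dx, X_mul_monomial, derivative_monomial]
    push_cast
    ring_nf

theorem stmt8 (i : ℕ) (p : ℂ[X]) :
    X ^ i * derivative^[i + 1] p =
      ∑ m ∈ range (i + 1),
        (stirling1 (i + 1) (m + 1) : ℂ) • Dx^[m] (derivative p) := by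
  induction p using Polynomial.induction_on' with
  | add p q hp hq =>
    simp only [iterate_map_add, mul_add, hp, hq, map_add, ← coe_dxLinearMap_pow, smul_add,
      sum_add_distrib]
  | monomial n c =>
    cases n with
    | zero => simp [← coe_dxLinearMap_pow]
    | succ n =>
      have hterm : ∀ m, (stirling1 (i + 1) (m + 1) : ℂ) • Dx^[m] (derivative (monomial (n + 1) c))
          = monomial n ((stirling1 (i + 1) (m + 1) : ℂ) * ((n + 1 : ℕ) : ℂ) ^ (m + 1) * c) := by
        intro m
        rw [derivative_monomial, iterate_Dx_monomial, smul_monomial, smul_eq_mul]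
        push_cast
        ring_nf
      rw [X_pow_mul_iterate_derivative_monomial_succ, sum_congr rfl fun m _ => hterm m,
        ← map_sum, ← sum_mul, ← eval_descPochhammer_succ, descPochhammer_eval_eq_descFactorial]
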